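/- arXiv:2504.13986 — 2 statements merged into one kernel-verified Lean document; each statement's English description precedes it below -/
import Mathlib

section
/- The order ∅[S_1,S_2,…,S_m] coincides with ∅[S_2,…,S_m] if and only if S_1 is logically equivalent to a disjunction of some (possibly empty, possibly all) Q-combinations of S_2,…,S_m. -/
/-- Propositional formulas over variables of type `α`. -/
inductive PropForm (α : Type) : Type
  | var : α → PropForm α
  | tru : PropForm α
  | fls : PropForm α
  | neg : PropForm α → PropForm α
  | conj : PropForm α → PropForm α → PropForm α
  | disj : PropForm α → PropForm α → PropForm α

namespace PropForm
/-- Evaluation of a formula in a valuation (model). -/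
def eval {α : Type} (v : α → Bool) : PropForm α → Bool
  | var a => v a
  | tru => true
  | fls => false
  | neg f => !(eval v f)
  | conj f g => eval v f && eval v g
  | disj f g => eval v f || eval v g
end PropForm

/-- A model `I` satisfies formula `A`. -/
def Sat {α : Type} (I : α → Bool) (A : PropForm α) : Prop := PropForm.eval I A = true

/-- The order induced by a single formula: `I ≤_A J` iff `I ⊨ A` or `J ⊭ A`. -/
def leA {α : Type} (A : PropForm α) (I J : α → Bool) : Prop := Sat I A ∨ ¬ Sat J A

/-- Auxiliary: the order generated from the flat state by a revision sequence given
in reverse order (most recent revision first). -/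
def leSeqRev {α : Type} (I J : α → Bool) : List (PropForm α) → Prop
  | [] => True
  | A :: S' => leA A I J ∧ (¬ leA A J I ∨ leSeqRev I J S')

/-- `I ≤_{∅S} J`: the order generated from the flat state by the sequence `S` of
lexicographic revisions (given in chronological order, so the last element of `S`
is the most recent revision).  It satisfies `leSeq [] I J ↔ True` and
`leSeq (S' ++ [A]) I J ↔ leA A I J ∧ (¬ leA A J I ∨ leSeq S' I J)`. -/
def leSeq {α : Type} (S : List (PropForm α)) (I J : α → Bool) : Prop :=
  leSeqRev I J S.reverse

/-- `I ≡_{∅S} J`: equivalence of models in the order generated by `S`. -/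
def equivSeq {α : Type} (S : List (PropForm α)) (I J : α → Bool) : Prop :=
  leSeq S I J ∧ leSeq S J I

/-- The Q-combination of formulas `S` determined by the Boolean vector `B`:
the conjunction over `i` of `S i` if `B i = true` and of `¬ S i` if `B i = false`. -/
def qcomb {α : Type} : List Bool → List (PropForm α) → PropForm α
  | b :: bs, s :: ss => PropForm.conj (if b then s else PropForm.neg s) (qcomb bs ss)
  | _, _ => PropForm.tru

/-!
Revising by `S₁` first and by `S` afterwards yields the lexicographic order with `∅S` as the
primary key and `S₁` as the tie-breaker: `∅(S₁ :: S)` refines `∅S` by `S₁` inside each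
`≡_{∅S}`-class. Hence the two orders agree iff `S₁` is constant on these classes. Two models are
`≡_{∅S}`-equivalent iff they give every formula of `S` the same truth value, i.e. iff they
satisfy the same Q-combination of `S`, so `S₁` is constant on the classes iff it is equivalent
to the disjunction of the Q-combinations satisfied by its models.
-/

section

variable {α : Type}

def profile (S : List (PropForm α)) (I : α → Bool) : List Bool :=
  S.map (PropForm.eval I)

@[simp]
theorem length_profile (S : List (PropForm α)) (I : α → Bool) :
    (profile S I).length = S.length :=
  List.length_map _

section Order

variable (I J : α → Bool)

theorem leA_total (A : PropForm α) : leA A I J ∨ leA A J I := by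
  unfold leA
  tauto

theorem leA_and_leA_iff (A : PropForm α) :
    leA A I J ∧ leA A J I ↔ A.eval I = A.eval J := by
  unfold leA Sat
  cases A.eval I <;> cases A.eval J <;> simp

theorem leSeqRev_append_singleton (A : PropForm α) (T : List (PropForm α)) :
    leSeqRev I J (T ++ [A]) ↔ leSeqRev I J T ∧ (¬ leSeqRev J I T ∨ leA A I J) := by
  induction T with
  | nil => simp [leSeqRev]
  | cons B T ih =>
    simp only [List.cons_append, leSeqRev, ih]
    have := leA_total I J B
    tauto

theorem leSeq_cons (A : PropForm α) (S : List (PropForm α)) :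
    leSeq (A :: S) I J ↔ leSeq S I J ∧ (¬ leSeq S J I ∨ leA A I J) := by
  rw [leSeq, List.reverse_cons, leSeqRev_append_singleton]
  rfl

theorem leSeqRev_and_leSeqRev_iff (T : List (PropForm α)) :
    leSeqRev I J T ∧ leSeqRev J I T ↔ ∀ A ∈ T, A.eval I = A.eval J := by
  induction T with
  | nil => simp [leSeqRev]
  | cons A T ih =>
    rw [List.forall_mem_cons, ← ih, ← leA_and_leA_iff]
    simp only [leSeqRev]
    tauto

theorem equivSeq_iff_profile_eq (S : List (PropForm α)) :
    equivSeq S I J ↔ profile S I = profile S J := by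
  rw [equivSeq, leSeq, leSeq, leSeqRev_and_leSeqRev_iff, profile, profile,
    List.map_eq_map_iff]
  simp only [List.mem_reverse]

end Order

theorem leSeq_cons_eq_leSeq_iff (A : PropForm α) (S : List (PropForm α)) :
    (∀ I J : α → Bool, leSeq (A :: S) I J ↔ leSeq S I J) ↔
      ∀ I J : α → Bool, equivSeq S I J → (Sat I A ↔ Sat J A) := by
  simp only [leSeq_cons, equivSeq]
  constructor
  · intro h I J ⟨hIJ, hJI⟩
    have hA_IJ := (((h I J).2 hIJ).2.resolve_left (not_not.2 hJI))
    have hA_JI := (((h J I).2 hJI).2.resolve_left (not_not.2 hIJ))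
    rw [Sat, Sat, (leA_and_leA_iff I J A).1 ⟨hA_IJ, hA_JI⟩]
  · intro h I J
    refine ⟨And.left, fun hIJ => ⟨hIJ, ?_⟩⟩
    by_cases hJI : leSeq S J I
    · have := h I J ⟨hIJ, hJI⟩
      unfold leA
      tauto
    · exact Or.inl hJI

theorem sat_qcomb_iff (I : α → Bool) {B : List Bool} {S : List (PropForm α)}
    (hB : B.length = S.length) : Sat I (qcomb B S) ↔ profile S I = B := by
  induction S generalizing B with
  | nil => simp_all [qcomb, Sat, PropForm.eval, profile]
  | cons A S ih =>
    obtain _ | ⟨b, B⟩ := B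
    · simp at hB
    · have := ih (Nat.succ_inj.1 hB)
      cases b <;> simp_all [qcomb, Sat, PropForm.eval, profile]

theorem exists_qcomb_disjunction_iff (A : PropForm α) (S : List (PropForm α)) :
    (∃ L : List (List Bool), (∀ B ∈ L, B.length = S.length) ∧
        ∀ I : α → Bool, Sat I A ↔ ∃ B ∈ L, Sat I (qcomb B S)) ↔
      ∀ I J : α → Bool, profile S I = profile S J → (Sat I A ↔ Sat J A) := by
  constructor
  · rintro ⟨L, hlen, hL⟩ I J hIJ
    have hsame : ∀ B ∈ L, Sat I (qcomb B S) ↔ Sat J (qcomb B S) := fun B hB => by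
      rw [sat_qcomb_iff I (hlen B hB), sat_qcomb_iff J (hlen B hB), hIJ]
    rw [hL, hL]
    exact exists_congr fun B => and_congr_right (hsame B)
  · intro h
    have hfin : {B | ∃ I, Sat I A ∧ profile S I = B}.Finite :=
      (List.finite_length_eq Bool S.length).subset (by rintro _ ⟨I, -, rfl⟩; simp)
    refine ⟨hfin.toFinset.toList, fun B hB => ?_, fun I => ⟨fun hI => ?_, ?_⟩⟩
    · simp only [Finset.mem_toList, Set.Finite.mem_toFinset] at hB
      obtain ⟨I, -, rfl⟩ := hB
      exact length_profile S I
    · exact ⟨profile S I, by simpa using ⟨I, hI, rfl⟩, (sat_qcomb_iff I (length_profile S I)).2 rfl⟩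
    · rintro ⟨B, hB, hIB⟩
      simp only [Finset.mem_toList, Set.Finite.mem_toFinset] at hB
      obtain ⟨J, hJ, rfl⟩ := hB
      exact (h I J ((sat_qcomb_iff I (length_profile S J)).1 hIB)).2 hJ

end

/-- STATEMENT 11: `∅(S₁ :: S)` coincides with `∅S` iff `S₁` is equivalent to a
disjunction of some Q-combinations of `S`. -/
theorem redundant_iff_disjunction {α : Type} (S1 : PropForm α) (S : List (PropForm α)) :
    (∀ I J : α → Bool, leSeq (S1 :: S) I J ↔ leSeq S I J) ↔
      (∃ L : List (List Bool), (∀ B ∈ L, B.length = S.length) ∧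
        (∀ I : α → Bool, Sat I S1 ↔ ∃ B ∈ L, Sat I (qcomb B S))) := by
  rw [leSeq_cons_eq_leSeq_iff, exists_qcomb_disjunction_iff]
  simp only [equivSeq_iff_profile_eq]
end

section
/- If the order ∅([F] ++ S ++ R) coincides with ∅(S ++ R), then for any formula S_a, the order ∅([F] ++ S ++ [S_a] ++ R) coincides with ∅(S ++ [S_a] ++ R): inserting a revision anywhere after a redundant first revision preserves its redundancy. -/
lemma leSeqRev_append {α : Type} (I J : α → Bool) (X Y : List (PropForm α)) :
    leSeqRev I J (X ++ Y) ↔ leSeqRev I J X ∧ (¬ leSeqRev J I X ∨ leSeqRev I J Y) := by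
  induction X with
  | nil => simp [leSeqRev]
  | cons A X ih => simp only [List.cons_append, leSeqRev, ih]; tauto

section Lex

variable {α : Type} {P Q R : List (PropForm α)} {I J : α → Bool}

lemma leSeq_append : leSeq (P ++ R) I J ↔ leSeq R I J ∧ (¬ leSeq R J I ∨ leSeq P I J) := by
  simp only [leSeq, List.reverse_append, leSeqRev_append]

lemma leSeq_append_singleton {A : PropForm α} :
    leSeq (P ++ [A]) I J ↔ leA A I J ∧ (¬ leA A J I ∨ leSeq P I J) := by
  simp only [leSeq, List.reverse_append, List.reverse_singleton, List.singleton_append, leSeqRev]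

lemma leSeq_iff_of_equivSeq_of_append_iff
    (h : ∀ I J, leSeq (P ++ R) I J ↔ leSeq (Q ++ R) I J) (hR : equivSeq R I J) :
    leSeq P I J ↔ leSeq Q I J := by
  have hIJ := h I J
  simp only [leSeq_append] at hIJ
  obtain ⟨hRIJ, hRJI⟩ := hR
  tauto

lemma leSeq_append_cons_iff_of_append_iff
    (h : ∀ I J, leSeq (P ++ R) I J ↔ leSeq (Q ++ R) I J) (A : PropForm α) :
    leSeq (P ++ A :: R) I J ↔ leSeq (Q ++ A :: R) I J := by
  have hPQ : leSeq R I J → leSeq R J I → (leSeq P I J ↔ leSeq Q I J) :=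
    fun hIJ hJI => leSeq_iff_of_equivSeq_of_append_iff h ⟨hIJ, hJI⟩
  rw [List.append_cons P, List.append_cons Q, leSeq_append (P := P ++ [A]),
    leSeq_append (P := Q ++ [A]), leSeq_append_singleton, leSeq_append_singleton]
  tauto

end Lex

/-- STATEMENT 14: inserting a revision anywhere after a redundant first revision
preserves its redundancy. -/
theorem redundancy_insert_anywhere {α : Type} (F : PropForm α) (S R : List (PropForm α))
    (h : ∀ I J : α → Bool, leSeq (F :: (S ++ R)) I J ↔ leSeq (S ++ R) I J)
    (Sa : PropForm α) :
    ∀ I J : α → Bool, leSeq (F :: (S ++ Sa :: R)) I J ↔ leSeq (S ++ Sa :: R) I J :=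
  fun _ _ => leSeq_append_cons_iff_of_append_iff (P := F :: S) h Sa
end
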